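/- Let v be an octonion with ‖v‖ = 1. Then for every octonion x, v̂ ∘ x̂ ∘ v̂ = ŵ where w = x − 2⟨x,v⟩v. Equivalently (since v̂⁻¹ = −v̂), conjugation of x̂ by v̂ fixes v̂ and acts as −1 on {x̂ : ⟨x,v⟩ = 0}: v̂ ∘ x̂ ∘ v̂⁻¹ equals the hat of 2⟨x,v⟩v − x. -/

import Mathlib

noncomputable section

/-- The octonions, realized as pairs of real quaternions (Cayley–Dickson construction). -/
abbrev Octonion : Type := Quaternion ℝ × Quaternion ℝ

/-- Octonion multiplication: `(a,b)·(c,d) = (a·c − conj(d)·b, d·a + b·conj(c))`. -/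
def omul (x y : Octonion) : Octonion :=
  (x.1 * y.1 - star y.2 * x.2, y.2 * x.1 + x.2 * star y.1)

/-- Octonion conjugation: `conj (a,b) = (conj a, −b)`. -/
def oconj (x : Octonion) : Octonion := (star x.1, -x.2)

/-- The unit octonion `1 = (1,0)`. -/
def oone : Octonion := (1, 0)

/-- The real inner product `⟨(a,b),(c,d)⟩ = Re(a·conj c) + Re(b·conj d)` on the octonions. -/
def oinner (x y : Octonion) : ℝ := (x.1 * star y.1).re + (x.2 * star y.2).re

/-- The Clifford-algebra embedding: `x̂ (y,z) = (−conj(x)·z, x·y)` on `𝕆 × 𝕆`. -/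
def hat (x : Octonion) (p : Octonion × Octonion) : Octonion × Octonion :=
  (-(omul (oconj x) p.2), omul x p.1)

/-!
The hat map satisfies the Clifford relation `â b̂ + b̂ â = −2⟨a,b⟩`. On the two components of
`𝕆 × 𝕆` this is the polarized composition law `conj(a)(b y) + conj(b)(a y) = 2⟨a,b⟩ y` (and its
mirror image); written out in quaternion coordinates the non-associative cross terms cancel in
pairs, and what is left are sums `q + conj q` of quaternions, which are real and hence central.
For a unit vector `v` the relation gives `v̂² = −1`, and then
`v̂ x̂ v̂ = v̂ (−2⟨x,v⟩ − v̂ x̂) = −2⟨x,v⟩ v̂ + x̂`, the hat of `x − 2⟨x,v⟩ v`.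
-/

open Quaternion
open scoped InnerProductSpace

lemma Quaternion.inner_star_star (a b : ℍ[ℝ]) : ⟪star a, star b⟫_ℝ = ⟪a, b⟫_ℝ := by
  simp only [inner_def, star_star, re_mul, re_star, imI_star, imJ_star, imK_star]
  ring

lemma Quaternion.mul_star_add_mul_star (a b : ℍ[ℝ]) :
    a * star b + b * star a = ((2 * ⟪a, b⟫_ℝ : ℝ) : ℍ[ℝ]) := by
  simpa only [star_mul, star_star, inner_def] using self_add_star' (a * star b)

lemma Quaternion.star_mul_add_star_mul (a b : ℍ[ℝ]) :
    star a * b + star b * a = ((2 * ⟪a, b⟫_ℝ : ℝ) : ℍ[ℝ]) := by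
  simpa only [star_star, inner_star_star] using mul_star_add_mul_star (star a) (star b)

lemma oinner_eq_inner_add_inner (a b : Octonion) :
    oinner a b = ⟪a.1, b.1⟫_ℝ + ⟪a.2, b.2⟫_ℝ := by
  simp only [oinner, inner_def]

lemma omul_neg_right (x y : Octonion) : omul x (-y) = -omul x y := by
  ext : 1 <;> simp only [omul, Prod.fst_neg, Prod.snd_neg, star_neg, mul_neg, neg_mul] <;> abel

lemma omul_oconj_omul_add (a b y : Octonion) :
    omul (oconj a) (omul b y) + omul (oconj b) (omul a y) = (2 * oinner a b) • y := by
  obtain ⟨A, B⟩ := a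
  obtain ⟨C, D⟩ := b
  obtain ⟨E, F⟩ := y
  simp only [omul, oconj, oinner_eq_inner_add_inner, Prod.mk_add_mk, Prod.smul_mk, Prod.mk.injEq,
    star_add, star_sub, star_mul, star_star]
  constructor
  · calc _ = (star A * C + star C * A) * E + E * (star D * B + star B * D) := by noncomm_ring
      _ = _ := by
        rw [star_mul_add_star_mul, star_mul_add_star_mul, coe_mul_eq_smul, mul_coe_eq_smul,
          real_inner_comm D B, ← add_smul, ← mul_add]
  · calc _ = F * (A * star C + C * star A) + (B * star D + D * star B) * F := by noncomm_ring
      _ = _ := by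
        rw [mul_star_add_mul_star, mul_star_add_mul_star, coe_mul_eq_smul, mul_coe_eq_smul,
          ← add_smul, ← mul_add]

lemma omul_omul_oconj_add (a b z : Octonion) :
    omul a (omul (oconj b) z) + omul b (omul (oconj a) z) = (2 * oinner a b) • z := by
  obtain ⟨A, B⟩ := a
  obtain ⟨C, D⟩ := b
  obtain ⟨E, F⟩ := z
  simp only [omul, oconj, oinner_eq_inner_add_inner, Prod.mk_add_mk, Prod.smul_mk, Prod.mk.injEq,
    star_add, star_sub, star_neg, star_mul, star_star]
  constructor
  · calc _ = (A * star C + C * star A) * E + E * (star D * B + star B * D) := by noncomm_ring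
      _ = _ := by
        rw [star_mul_add_star_mul, mul_star_add_mul_star, coe_mul_eq_smul, mul_coe_eq_smul,
          real_inner_comm D B, ← add_smul, ← mul_add]
  · calc _ = F * (star A * C + star C * A) + (B * star D + D * star B) * F := by noncomm_ring
      _ = _ := by
        rw [mul_star_add_mul_star, star_mul_add_star_mul, coe_mul_eq_smul, mul_coe_eq_smul,
          ← add_smul, ← mul_add]

lemma hat_hat_add_hat_hat (a b : Octonion) (p : Octonion × Octonion) :
    hat a (hat b p) + hat b (hat a p) = -((2 * oinner a b) • p) := by
  simp only [hat, omul_neg_right, Prod.mk_add_mk, ← neg_add, omul_oconj_omul_add,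
    omul_omul_oconj_add]
  rfl

def hatₗ : Octonion →ₗ[ℝ] Module.End ℝ (Octonion × Octonion) :=
  LinearMap.mk₂ ℝ hat
    (fun x y p => by
      ext : 2 <;> simp only [hat, omul, oconj, Prod.fst_add, Prod.snd_add, Prod.fst_neg,
        Prod.snd_neg, star_add] <;> noncomm_ring)
    (fun c x p => by
      ext : 2 <;> simp only [hat, omul, oconj, Prod.smul_fst, Prod.smul_snd, Prod.fst_neg,
        Prod.snd_neg, Quaternion.star_smul, smul_sub, smul_add, smul_neg, smul_mul_assoc,
        mul_smul_comm, mul_neg, neg_mul])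
    (fun x p q => by
      ext : 2 <;> simp only [hat, omul, oconj, Prod.fst_add, Prod.snd_add, Prod.fst_neg,
        Prod.snd_neg, star_add] <;> noncomm_ring)
    (fun c x p => by
      ext : 2 <;> simp only [hat, omul, oconj, Prod.smul_fst, Prod.smul_snd, Prod.fst_neg,
        Prod.snd_neg, Quaternion.star_smul, smul_sub, smul_add, smul_neg, smul_mul_assoc,
        mul_smul_comm, mul_neg, neg_mul])

lemma hatₗ_mul_add_mul (a b : Octonion) :
    hatₗ a * hatₗ b + hatₗ b * hatₗ a = (-(2 * oinner a b)) • 1 :=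
  LinearMap.ext fun p => by
    rw [LinearMap.add_apply, Module.End.mul_apply, Module.End.mul_apply, LinearMap.smul_apply,
      Module.End.one_apply, neg_smul]
    exact hat_hat_add_hat_hat a b p

lemma hatₗ_mul_self (a : Octonion) : hatₗ a * hatₗ a = (-oinner a a) • 1 := by
  have h := hatₗ_mul_add_mul a a
  rw [← two_smul ℝ (hatₗ a * hatₗ a), ← mul_neg, mul_smul] at h
  exact smul_right_injective _ two_ne_zero h

lemma hatₗ_mul_mul_self {v : Octonion} (hv : oinner v v = 1) (x : Octonion) :
    hatₗ v * hatₗ x * hatₗ v = hatₗ (x - (2 * oinner x v) • v) := by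
  rw [mul_assoc, eq_sub_of_add_eq (hatₗ_mul_add_mul x v), mul_sub, mul_smul_comm, mul_one,
    ← mul_assoc, hatₗ_mul_self, hv, smul_mul_assoc, one_mul, map_sub, map_smul]
  module

/-- For a unit octonion `v` and any octonion `x`,
`v̂ ∘ x̂ ∘ v̂ = ŵ` where `w = x − 2⟨x,v⟩v`; equivalently, since `v̂⁻¹ = −v̂`,
conjugation of `x̂` by `v̂` is the hat of `2⟨x,v⟩v − x`. -/
theorem hat_conj_reflection (v : Octonion) (hv : oinner v v = 1) :
    (∀ (x : Octonion) (p : Octonion × Octonion),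
      hat v (hat x (hat v p)) = hat (x - (2 * oinner x v) • v) p) ∧
    (∀ (x : Octonion) (p : Octonion × Octonion),
      hat v (hat x (-(hat v p))) = hat ((2 * oinner x v) • v - x) p) := by
  have key (x : Octonion) (p : Octonion × Octonion) :
      hatₗ v (hatₗ x (hatₗ v p)) = hatₗ (x - (2 * oinner x v) • v) p :=
    LinearMap.congr_fun (hatₗ_mul_mul_self hv x) p
  refine ⟨key, fun x p => ?_⟩
  rw [← neg_sub x]
  change hatₗ v (hatₗ x (-hatₗ v p)) = hatₗ (-(x - (2 * oinner x v) • v)) p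
  rw [map_neg, map_neg, map_neg, LinearMap.neg_apply, key]
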